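/- Let n ≥ m ≥ 2 and let μ be a probability measure on the edges of K_n maximizing ρ(·; m). Then for every vertex i ∈ [n], μ̄(i) ≤ 12/(m−1). -/
import Mathlib


open Finset
open scoped Classical

/-- A (bounded, nonnegative) measure on the edges of the complete graph `K_n`,
given by a symmetric nonnegative weight function vanishing on the diagonal. -/
structure EdgeMeasure (n : ℕ) where
  w : Fin n → Fin n → ℝ
  symm : ∀ i j, w i j = w j i
  diag : ∀ i, w i i = 0
  nonneg : ∀ i j, 0 ≤ w i j

/-- Total mass of an edge measure (each unordered edge counted once). -/
noncomputable def mass {n : ℕ} (μ : EdgeMeasure n) : ℝ :=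
  (∑ i, ∑ j, μ.w i j) / 2

/-- Weighted degree `μ̄(v)` of a vertex. -/
noncomputable def mubar {n : ℕ} (μ : EdgeMeasure n) (v : Fin n) : ℝ :=
  ∑ u, μ.w v u

/-- The μ-weight of the path traced by a tuple of `m` vertices:
the product of the weights of its `m-1` consecutive edges. -/
noncomputable def pathWt {n m : ℕ} (μ : EdgeMeasure n) (x : Fin m → Fin n) : ℝ :=
  ∏ i : Fin (m - 1),
    μ.w (x ⟨i.1, by have := i.2; omega⟩) (x ⟨i.1 + 1, by have := i.2; omega⟩)

/-- `β(μ; P_m)`: total μ-weight of the (unlabeled, non-induced) copies of the path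
on `m` vertices in `K_n`; each unlabeled copy corresponds to exactly two injective
labeled tuples, whence the division by 2. -/
noncomputable def betaP {n : ℕ} (μ : EdgeMeasure n) (m : ℕ) : ℝ :=
  (∑ x ∈ univ.filter (fun x : Fin m → Fin n => Function.Injective x), pathWt μ x) / 2

/-- `β(P_m)`: the supremum of `β(μ; P_m)` over all `n` and all probability
measures `μ` on the edges of `K_n`. -/
noncomputable def betaPathSup (m : ℕ) : ℝ :=
  sSup {r : ℝ | ∃ n : ℕ, ∃ μ : EdgeMeasure n, mass μ = 1 ∧ r = betaP μ m}

/-- `β*(μ; P_{(s,t)})` with the path of length `s` starting at vertex `vs` and the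
path of length `t` starting at vertex `vt`: each copy of the disjoint union
`P_{s+1} ⊔ P_{t+1}` is recorded by a jointly injective pair of tuples. -/
noncomputable def betaStar {n : ℕ} (μ : EdgeMeasure n) (s t : ℕ) (vs vt : Fin n) : ℝ :=
  ∑ p ∈ univ.filter
      (fun p : (Fin (s + 1) → Fin n) × (Fin (t + 1) → Fin n) =>
        Function.Injective (Sum.elim p.1 p.2) ∧ p.1 0 = vs ∧ p.2 0 = vt),
    pathWt μ p.1 * pathWt μ p.2

/-- `β*_{w,n}(P_{(s,t)})`: the supremum of `β*(μ; P_{(s,t)})` over all measures of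
total mass `w` on the edges of `K_n`, the length-`s` path starting at vertex `n`
(index `n-1`) and the length-`t` path starting at vertex `1` (index `0`). -/
noncomputable def betaStarSupN (w : ℝ) (n s t : ℕ) : ℝ :=
  sSup {r : ℝ | ∃ μ : EdgeMeasure n, mass μ = w ∧
    ∃ h : 0 < n, r = betaStar μ s t ⟨n - 1, by omega⟩ ⟨0, h⟩}

/-- `ρ(μ; m) = ∑_{x ∈ (n)_m} μ̄(x_1) (∏ μ(x_i,x_{i+1})) μ̄(x_m)`, the sum over
ordered tuples of `m` distinct vertices. -/
noncomputable def rho {n : ℕ} (μ : EdgeMeasure n) (m : ℕ) : ℝ :=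
  if h : 0 < m then
    ∑ x ∈ univ.filter (fun x : Fin m → Fin n => Function.Injective x),
      mubar μ (x ⟨0, h⟩) * pathWt μ x * mubar μ (x ⟨m - 1, by omega⟩)
  else 0

/-- `ρ_n(m)`: supremum of `ρ(μ; m)` over probability measures on the edges of `K_n`. -/
noncomputable def rhoN (n m : ℕ) : ℝ :=
  sSup {r : ℝ | ∃ μ : EdgeMeasure n, mass μ = 1 ∧ r = rho μ m}

/-- `ρ(m) = sup_n ρ_n(m)`. -/
noncomputable def rhoSup (m : ℕ) : ℝ :=
  sSup {r : ℝ | ∃ n : ℕ, r = rhoN n m}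

/-- `μ` is the uniform probability measure on the edges of the cycle `C_m` on the
vertices `0, 1, …, m-1` of `K_n`: each cycle edge gets weight `1/m`. -/
def CycleUniform {n : ℕ} (μ : EdgeMeasure n) (m : ℕ) : Prop :=
  ∀ a b : Fin n, μ.w a b =
    (if a.1 < m ∧ b.1 < m ∧ b.1 = (a.1 + 1) % m then (1 : ℝ) / m else 0) +
    (if a.1 < m ∧ b.1 < m ∧ a.1 = (b.1 + 1) % m then (1 : ℝ) / m else 0)

/-- `deg_P(v)`: the number of edges of the path traced by the tuple `p` that are
incident to the vertex `v`. -/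
noncomputable def degTuple {n m : ℕ} (p : Fin m → Fin n) (v : Fin n) : ℕ :=
  ((univ : Finset (Fin (m - 1))).filter (fun i =>
      p ⟨i.1, by have := i.2; omega⟩ = v ∨ p ⟨i.1 + 1, by have := i.2; omega⟩ = v)).card


lemma pathWt_nonneg' {n m : ℕ} (μ : EdgeMeasure n) (x : Fin m → Fin n) : 0 ≤ pathWt μ x :=
  Finset.prod_nonneg fun _ _ => μ.nonneg _ _

lemma mubar_nonneg' {n : ℕ} (μ : EdgeMeasure n) (v : Fin n) : 0 ≤ mubar μ v :=
  Finset.sum_nonneg fun _ _ => μ.nonneg _ _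

lemma mubar_le_one' {n : ℕ} (μ : EdgeMeasure n) (hmass : mass μ = 1) (i : Fin n) :
    mubar μ i ≤ 1 := by
  have h2 : ∑ u, ∑ v, μ.w u v = 2 := by
    unfold mass at hmass; linarith
  have hsplit : ∑ u, ∑ v, μ.w u v
      = (∑ v, μ.w i v) + ∑ u ∈ univ.erase i, ∑ v, μ.w u v :=
    (Finset.add_sum_erase _ _ (mem_univ i)).symm
  have h4 : ∑ u ∈ univ.erase i, μ.w u i ≤ ∑ u ∈ univ.erase i, ∑ v, μ.w u v :=
    Finset.sum_le_sum fun u _ => Finset.single_le_sum (fun v _ => μ.nonneg u v) (mem_univ i)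
  have h5 : ∑ u ∈ univ.erase i, μ.w u i = mubar μ i := by
    rw [Finset.sum_erase (f := fun u => μ.w u i) univ (μ.diag i)]
    exact Finset.sum_congr rfl fun u _ => μ.symm u i
  have h6 : (∑ v, μ.w i v) = mubar μ i := rfl
  linarith

lemma degTuple_le_two' {n m : ℕ} (x : Fin m → Fin n) (hx : Function.Injective x) (v : Fin n) :
    degTuple x v ≤ 2 := by
  unfold degTuple
  set S := (univ : Finset (Fin (m-1))).filter (fun j =>
      x ⟨j.1, by have := j.2; omega⟩ = v ∨ x ⟨j.1 + 1, by have := j.2; omega⟩ = v) with hS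
  by_cases hj : ∃ j : Fin m, x j = v
  · obtain ⟨j, hjv⟩ := hj
    have himg : S.image Fin.val ⊆ {j.1 - 1, j.1} := by
      intro k hk
      simp only [Finset.mem_image] at hk
      obtain ⟨b, hb, rfl⟩ := hk
      rw [hS, Finset.mem_filter] at hb
      rcases hb.2 with h | h
      · have h1 := hx (h.trans hjv.symm)
        have h2 : b.1 = j.1 := congrArg Fin.val h1
        simp [h2]
      · have h1 := hx (h.trans hjv.symm)
        have h2 : b.1 + 1 = j.1 := congrArg Fin.val h1
        have h3 : b.1 = j.1 - 1 := by omega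
        simp [h3]
    calc S.card = (S.image Fin.val).card :=
          (Finset.card_image_of_injective S Fin.val_injective).symm
      _ ≤ ({j.1 - 1, j.1} : Finset ℕ).card := Finset.card_le_card himg
      _ ≤ 2 := (Finset.card_insert_le _ _).trans (by simp)
  · push_neg at hj
    have hSe : S = ∅ := by
      rw [hS, Finset.filter_eq_empty_iff]
      rintro b -
      push_neg
      exact ⟨hj _, hj _⟩
    simp [hSe]

/-- For a probability measure `μ` on the edges of `K_n` (`n ≥ m ≥ 2`) maximizing
`ρ(·; m)` (with `ρ(μ; m) > 0`), every weighted degree satisfies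
`μ̄(i) ≤ 12/(m-1)`. -/
theorem stmt19 (n m : ℕ) (hm : 2 ≤ m) (hmn : m ≤ n) (μ : EdgeMeasure n)
    (hmass : mass μ = 1)
    (hopt : ∀ η : EdgeMeasure n, mass η = 1 → rho η m ≤ rho μ m)
    (hpos : 0 < rho μ m) (i : Fin n) :
    mubar μ i ≤ 12 / ((m : ℝ) - 1) := by
  have hm0 : 0 < m := by omega
  set a := mubar μ i with ha
  have ha0 : 0 ≤ a := mubar_nonneg' μ i
  have ha1 : a ≤ 1 := mubar_le_one' μ hmass i
  set D : ℝ := 1 - a / 3 with hD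
  have hDpos : 0 < D := by rw [hD]; linarith
  set η : EdgeMeasure n :=
    { w := fun u v => (if u = i ∨ v = i then (2:ℝ)/3 else 1) * μ.w u v / D
      symm := fun u v => by
        show (if u = i ∨ v = i then (2:ℝ)/3 else 1) * μ.w u v / D
            = (if v = i ∨ u = i then (2:ℝ)/3 else 1) * μ.w v u / D
        rw [μ.symm u v]
        exact congrArg (· / D) (congrArg (· * μ.w v u) (if_congr or_comm rfl rfl))
      diag := fun u => by simp [μ.diag]
      nonneg := fun u v =>
        div_nonneg (mul_nonneg (by split <;> norm_num) (μ.nonneg u v)) hDpos.le }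
    with hη
  have hηw : ∀ u v, η.w u v = (if u = i ∨ v = i then (2:ℝ)/3 else 1) * μ.w u v / D :=
    fun u v => rfl
  -- mass of η
  have h2 : ∑ u, ∑ v, μ.w u v = 2 := by unfold mass at hmass; linarith
  have hind : ∑ u, ∑ v, (if u = i ∨ v = i then μ.w u v else 0) = 2 * a := by
    rw [← Finset.add_sum_erase _ _ (mem_univ i)]
    have e1 : ∑ v, (if i = i ∨ v = i then μ.w i v else 0) = a := by
      rw [ha]
      exact Finset.sum_congr rfl fun v _ => if_pos (Or.inl rfl)
    have e2 : ∀ u ∈ univ.erase i,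
        (∑ v, if u = i ∨ v = i then μ.w u v else 0) = μ.w u i := by
      intro u hu
      have hui : u ≠ i := (Finset.mem_erase.mp hu).1
      have hc : ∀ v, (if u = i ∨ v = i then μ.w u v else 0)
          = if v = i then μ.w u v else 0 := by
        intro v
        by_cases h : v = i
        · simp [h, hui]
        · simp [h, hui]
      rw [Finset.sum_congr rfl fun v _ => hc v,
        Finset.sum_ite_eq' univ i (fun v => μ.w u v)]
      simp
    rw [e1, Finset.sum_congr rfl e2,
      Finset.sum_erase (f := fun u => μ.w u i) univ (μ.diag i)]
    have e3 : ∑ u, μ.w u i = a := by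
      rw [ha]; exact Finset.sum_congr rfl fun u _ => μ.symm u i
    rw [e3]; ring
  have hmassη : mass η = 1 := by
    have hnum : ∀ u v, η.w u v * D
        = μ.w u v - (1/3) * (if u = i ∨ v = i then μ.w u v else 0) := by
      intro u v
      rw [hηw, div_mul_cancel₀ _ hDpos.ne']
      by_cases h : u = i ∨ v = i
      · simp only [if_pos h]; ring
      · simp only [if_neg h]; ring
    have hsum : (∑ u, ∑ v, η.w u v) * D = 2 * D := by
      calc (∑ u, ∑ v, η.w u v) * D = ∑ u, ∑ v, (η.w u v * D) := by
            rw [Finset.sum_mul]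
            exact Finset.sum_congr rfl fun u _ => by rw [Finset.sum_mul]
        _ = ∑ u, ∑ v, (μ.w u v - (1/3) * (if u = i ∨ v = i then μ.w u v else 0)) := by
            exact Finset.sum_congr rfl fun u _ =>
              Finset.sum_congr rfl fun v _ => hnum u v
        _ = ∑ u, ((∑ v, μ.w u v)
            - (1/3) * ∑ v, (if u = i ∨ v = i then μ.w u v else 0)) :=
            Finset.sum_congr rfl fun u _ => by
              rw [Finset.sum_sub_distrib, ← Finset.mul_sum]
        _ = (∑ u, ∑ v, μ.w u v)
            - (1/3) * ∑ u, ∑ v, (if u = i ∨ v = i then μ.w u v else 0) := by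
            rw [Finset.sum_sub_distrib, ← Finset.mul_sum]
        _ = 2 - (1/3) * (2 * a) := by rw [h2, hind]
        _ = 2 * D := by rw [hD]; ring
    have hsum2 : ∑ u, ∑ v, η.w u v = 2 := mul_right_cancel₀ hDpos.ne' hsum
    unfold mass
    rw [hsum2]; norm_num
  -- pointwise degree bounds
  have hmub : ∀ v, (2:ℝ)/3/D * mubar μ v ≤ mubar η v := by
    intro v
    show (2:ℝ)/3/D * mubar μ v ≤ ∑ u, η.w v u
    rw [show mubar μ v = ∑ u, μ.w v u from rfl, Finset.mul_sum]
    refine Finset.sum_le_sum fun u _ => ?_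
    rw [hηw, div_mul_eq_mul_div]
    exact (div_le_div_iff_of_pos_right hDpos).mpr
      (mul_le_mul_of_nonneg_right (by split <;> norm_num) (μ.nonneg v u))
  have hpw : ∀ x : Fin m → Fin n, Function.Injective x →
      (2/3:ℝ)^2 / D^(m-1) * pathWt μ x ≤ pathWt η x := by
    intro x hx
    have h1 : ((2:ℝ)/3)^2 ≤ ((2:ℝ)/3)^(degTuple x i) :=
      pow_le_pow_of_le_one (by norm_num) (by norm_num) (degTuple_le_two' x hx i)
    calc (2/3:ℝ)^2 / D^(m-1) * pathWt μ x
        = ((2:ℝ)/3)^2 * ((D⁻¹)^(m-1) * pathWt μ x) := by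
          rw [inv_pow]; ring
      _ ≤ ((2:ℝ)/3)^(degTuple x i) * ((D⁻¹)^(m-1) * pathWt μ x) :=
          mul_le_mul_of_nonneg_right h1
            (mul_nonneg (pow_nonneg (inv_nonneg.mpr hDpos.le) _) (pathWt_nonneg' μ x))
      _ = pathWt η x := by
          unfold pathWt degTuple
          simp only [hηw, div_eq_mul_inv]
          rw [Finset.prod_mul_distrib, Finset.prod_mul_distrib, Finset.prod_ite,
            Finset.prod_const_one, mul_one, Finset.prod_const, Finset.prod_const,
            Finset.card_univ, Fintype.card_fin]
          ring
  -- per-term comparison and summation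
  have hterm : ∀ x ∈ univ.filter (fun x : Fin m → Fin n => Function.Injective x),
      (2/3:ℝ)^4 / D^(m+1)
          * (mubar μ (x ⟨0, hm0⟩) * pathWt μ x * mubar μ (x ⟨m-1, by omega⟩))
        ≤ mubar η (x ⟨0, hm0⟩) * pathWt η x * mubar η (x ⟨m-1, by omega⟩) := by
    intro x hx
    have hxinj : Function.Injective x := (Finset.mem_filter.mp hx).2
    have e : (2/3:ℝ)^4 / D^(m+1)
        * (mubar μ (x ⟨0, hm0⟩) * pathWt μ x * mubar μ (x ⟨m-1, by omega⟩))
        = ((2:ℝ)/3/D * mubar μ (x ⟨0, hm0⟩))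
          * ((2/3:ℝ)^2 / D^(m-1) * pathWt μ x)
          * ((2:ℝ)/3/D * mubar μ (x ⟨m-1, by omega⟩)) := by
      have hpow : D^(m+1) = D * D^(m-1) * D := by
        rw [show m+1 = 1 + (m-1) + 1 by omega, pow_add, pow_add, pow_one]
      rw [hpow]
      have hne : D ≠ 0 := hDpos.ne'
      have hne2 : D^(m-1) ≠ 0 := pow_ne_zero _ hne
      field_simp
    rw [e]
    have t1 := hmub (x ⟨0, hm0⟩)
    have t2 := hpw x hxinj
    have t3 := hmub (x ⟨m-1, by omega⟩)
    have n1 : 0 ≤ (2:ℝ)/3/D * mubar μ (x ⟨0, hm0⟩) :=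
      mul_nonneg (div_nonneg (by norm_num) hDpos.le) (mubar_nonneg' μ _)
    have n2 : 0 ≤ (2/3:ℝ)^2 / D^(m-1) * pathWt μ x :=
      mul_nonneg (div_nonneg (by norm_num) (pow_nonneg hDpos.le _)) (pathWt_nonneg' μ x)
    have n3 : 0 ≤ (2:ℝ)/3/D * mubar μ (x ⟨m-1, by omega⟩) :=
      mul_nonneg (div_nonneg (by norm_num) hDpos.le) (mubar_nonneg' μ _)
    exact mul_le_mul (mul_le_mul t1 t2 n2 (mubar_nonneg' η _)) t3 n3
      (mul_nonneg (mubar_nonneg' η _) (pathWt_nonneg' η x))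
  have hsumle : (2/3:ℝ)^4 / D^(m+1) * rho μ m ≤ rho η m := by
    unfold rho
    rw [dif_pos hm0, dif_pos hm0, Finset.mul_sum]
    exact Finset.sum_le_sum hterm
  have hle : rho η m ≤ rho μ m := hopt η hmassη
  have hc : (2/3:ℝ)^4 / D^(m+1) ≤ 1 := by
    nlinarith [hsumle.trans hle, hpos]
  have hkey : (2/3:ℝ)^4 ≤ D^(m+1) := (div_le_one (pow_pos hDpos _)).mp hc
  -- numerical endgame
  have hm1R : (1:ℝ) ≤ (m:ℝ) - 1 := by
    have : (2:ℝ) ≤ (m:ℝ) := by exact_mod_cast hm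
    linarith
  by_cases hm13 : m ≤ 13
  · have hle13 : (m:ℝ) - 1 ≤ 12 := by
      have : (m:ℝ) ≤ 13 := by exact_mod_cast hm13
      linarith
    have h12 : (1:ℝ) ≤ 12 / ((m:ℝ)-1) := by
      rw [le_div_iff₀ (by linarith)]; linarith
    linarith
  · push_neg at hm13
    by_contra hcon
    push_neg at hcon
    have hMR : (14:ℝ) ≤ (m:ℝ) := by exact_mod_cast hm13
    set M : ℝ := (m:ℝ) - 1 with hMdef
    have hM : (13:ℝ) ≤ M := by rw [hMdef]; linarith
    have hMpos : (0:ℝ) < M := by linarith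
    have hb : (0:ℝ) ≤ 1 - 4/M := by
      have : (4:ℝ)/M ≤ 1 := by rw [div_le_one hMpos]; linarith
      linarith
    have hDlt : D ≤ 1 - 4/M := by
      have h12M : (12:ℝ)/M < a := hcon
      have h4M : (12:ℝ)/M = 3 * (4/M) := by ring
      rw [hD]; rw [h4M] at h12M; linarith
    have s1 : D^(m+1) ≤ (1 - 4/M)^(m+1) := pow_le_pow_left₀ hDpos.le hDlt _
    have s2 : (1 - 4/M)^(m+1) ≤ (Real.exp (-(4/M)))^(m+1) :=
      pow_le_pow_left₀ hb (by have := Real.add_one_le_exp (-(4/M)); linarith) _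
    have s3 : (Real.exp (-(4/M)))^(m+1) = Real.exp (((m:ℝ)+1) * (-(4/M))) := by
      rw [← Real.exp_nat_mul]
      push_cast
      ring_nf
    have s4 : Real.exp (((m:ℝ)+1) * (-(4/M))) ≤ Real.exp (-4) := by
      apply Real.exp_le_exp.mpr
      have hdv : (4:ℝ) ≤ 4*((m:ℝ)+1)/M := by
        rw [le_div_iff₀ hMpos]
        have : M = (m:ℝ) - 1 := hMdef
        linarith
      have heq : ((m:ℝ)+1) * (-(4/M)) = -(4*((m:ℝ)+1)/M) := by ring
      rw [heq]
      linarith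
    have s5 : Real.exp (-4:ℝ) < (2/3:ℝ)^4 := by
      have hx1 : (2:ℝ) ≤ Real.exp 1 := by
        have := Real.add_one_le_exp (1:ℝ); linarith
      have hx4 : (16:ℝ) ≤ Real.exp 4 := by
        have he : Real.exp (4:ℝ) = (Real.exp 1)^4 := by
          rw [← Real.exp_nat_mul]; norm_num
        rw [he]
        calc (16:ℝ) = 2^4 := by norm_num
          _ ≤ (Real.exp 1)^4 := pow_le_pow_left₀ (by norm_num) hx1 4
      have hneg : Real.exp (-4:ℝ) = (Real.exp 4)⁻¹ := Real.exp_neg 4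
      rw [hneg]
      have hiv : (Real.exp 4)⁻¹ ≤ (16:ℝ)⁻¹ :=
        inv_anti₀ (by norm_num) hx4
      have : ((16:ℝ))⁻¹ < (2/3:ℝ)^4 := by norm_num
      linarith
    linarith [hkey, s1, s2, s3.le, s4, s5, s3.ge]
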